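/- arXiv:1006.5883 — 5 statements merged into one kernel-verified Lean document; each statement's English description precedes it below -/
import Mathlib

section
/- Let 1 > r_1 ≥ r_2 ≥ ⋯ ≥ r_J > 0 with J ≥ 2, let D be the unique real root of ∑_{j=1}^J r_j^D = 1, and let D̃ be the unique real root of ∑_{j=1}^{J−1} r_j^{D̃} = 1 (so D̃ < D). Let f(s) = 1 − (r_1^s + ⋯ + r_J^s). Then every zero s_0 of f with D̃ < Re(s_0) < D satisfies Re(f′(s_0)) ≥ log r_1^{−1} > 0; in particular every such zero of f is simple, and |1/f′(s_0)| ≤ 1/log r_1^{−1}. Equivalently, all poles of ζ(s) = 1/f(s) in the strip {s : D̃ < Re(s) < D} are simple and their residues are bounded in absolute value by 1/log r_1^{−1}. -/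
/-!
Write `aⱼ = Re(rⱼ^{s₀})` and `Lⱼ = log rⱼ⁻¹`, so that `Re f'(s₀) = ∑ Lⱼ aⱼ` with `L` nondecreasing
and `∑ aⱼ = 1` because `f(s₀) = 0`. Since `aⱼ ≤ rⱼ^{Re s₀} ≤ rⱼ^{D̃}`, every partial sum of the `aⱼ`
that omits `a_J` is at most `∑_{j<J} rⱼ^{D̃} = 1`, i.e. every tail sum of the `aⱼ` is nonnegative.
By Abel summation a nondecreasing weight `L` against nonnegative tails gives `∑ Lⱼ aⱼ ≥ L₁ ∑ aⱼ = L₁`.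
-/

open Finset

theorem Finset.sum_mul_nonneg_of_monotoneOn {ι : Type*} [LinearOrder ι] (s : Finset ι)
    (a M : ι → ℝ) (hM : MonotoneOn M s) (hM₀ : ∀ i ∈ s, 0 ≤ M i)
    (htail : ∀ i ∈ s, 0 ≤ ∑ j ∈ s with i ≤ j, a j) :
    0 ≤ ∑ i ∈ s, M i * a i := by
  induction s using Finset.induction_on_min generalizing M with
  | empty => simp
  | insert x s hx ih =>
    have hxs : x ∉ s := fun h => lt_irrefl x (hx x h)
    have htail_s : ∀ i ∈ s, 0 ≤ ∑ j ∈ s with i ≤ j, a j := by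
      intro i hi
      have := htail i (mem_insert_of_mem hi)
      rwa [filter_insert, if_neg (not_le.2 (hx i hi))] at this
    -- Peel off the level `M x`: what remains is nonnegative and monotone on `s`.
    have hsplit : ∑ i ∈ insert x s, M i * a i
        = M x * ∑ i ∈ insert x s, a i + ∑ i ∈ s, (M i - M x) * a i := by
      simp only [sum_insert hxs, sub_mul, sum_sub_distrib, mul_add, mul_sum]
      ring
    have htotal : 0 ≤ ∑ i ∈ insert x s, a i := by
      have := htail x (mem_insert_self x s)
      rwa [filter_insert, if_pos le_rfl, filter_true_of_mem fun i hi => (hx i hi).le] at this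
    rw [hsplit]
    refine add_nonneg (mul_nonneg (hM₀ x (mem_insert_self x s)) htotal) (ih _ ?_ ?_ htail_s)
    · exact fun i hi j hj hij => sub_le_sub_right
        (hM (mem_insert_of_mem hi) (mem_insert_of_mem hj) hij) _
    · exact fun i hi => sub_nonneg.2
        (hM (mem_insert_self x s) (mem_insert_of_mem hi) (hx i hi).le)

theorem Finset.le_sum_mul_of_monotone {ι : Type*} [Fintype ι] [LinearOrder ι]
    {a L : ι → ℝ} (hL : Monotone L) (ha : ∑ i, a i = 1)
    (hpartial : ∀ i, ∑ j with j < i, a j ≤ 1) {c : ℝ} (hc : ∀ i, c ≤ L i) :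
    c ≤ ∑ i, L i * a i := by
  have htail : ∀ i ∈ (univ : Finset ι), 0 ≤ ∑ j with i ≤ j, a j := by
    intro i _
    have := sum_filter_add_sum_filter_not univ (fun j => j < i) a
    simp only [not_lt] at this
    linarith [hpartial i]
  have := (univ : Finset ι).sum_mul_nonneg_of_monotoneOn a (fun i => L i - c)
    (fun i _ j _ hij => sub_le_sub_right (hL hij) c) (fun i _ => sub_nonneg.2 (hc i)) htail
  simp only [sub_mul, sum_sub_distrib, ← mul_sum, ha] at this
  linarith

theorem hasDerivAt_one_sub_sum_cpow {ι : Type*} [Fintype ι] {r : ι → ℝ} (hr : ∀ j, 0 < r j)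
    (s : ℂ) : HasDerivAt (fun s : ℂ => 1 - ∑ j, (r j : ℂ) ^ s)
      (∑ j, (Real.log (r j)⁻¹ : ℂ) * (r j : ℂ) ^ s) s := by
  have hsum := HasDerivAt.fun_sum (u := univ) fun j _ =>
    (Complex.hasStrictDerivAt_const_cpow (x := (r j : ℂ)) (y := s)
      (Or.inl (by exact_mod_cast (hr j).ne'))).hasDerivAt
  refine (hsum.const_sub 1).congr_deriv ?_
  rw [← sum_neg_distrib]
  refine sum_congr rfl fun j _ => ?_
  rw [Real.log_inv, Complex.ofReal_neg, Complex.ofReal_log (hr j).le]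
  ring

theorem re_deriv_one_sub_sum_cpow {ι : Type*} [Fintype ι] {r : ι → ℝ} (hr : ∀ j, 0 < r j)
    (s : ℂ) : (deriv (fun s : ℂ => 1 - ∑ j, (r j : ℂ) ^ s) s).re
      = ∑ j, Real.log (r j)⁻¹ * ((r j : ℂ) ^ s).re := by
  simp only [(hasDerivAt_one_sub_sum_cpow hr s).deriv, Complex.re_sum, Complex.re_ofReal_mul]

theorem sum_re_cpow_filter_lt_le_one {J : ℕ} {r : Fin J → ℝ} (hr0 : ∀ j, 0 < r j)
    (hr1 : ∀ j, r j < 1) {Dt : ℝ}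
    (hDt : ∑ j ∈ univ.filter (fun j : Fin J => (j : ℕ) + 1 < J), r j ^ Dt = 1)
    {s : ℂ} (hs : Dt ≤ s.re) (i : Fin J) :
    ∑ j with j < i, ((r j : ℂ) ^ s).re ≤ 1 := by
  calc ∑ j with j < i, ((r j : ℂ) ^ s).re
      ≤ ∑ j with j < i, r j ^ Dt := sum_le_sum fun j _ => by
        calc ((r j : ℂ) ^ s).re ≤ ‖(r j : ℂ) ^ s‖ := Complex.re_le_norm _
          _ = r j ^ s.re := Complex.norm_cpow_eq_rpow_re_of_pos (hr0 j) s
          _ ≤ r j ^ Dt := Real.rpow_le_rpow_of_exponent_ge (hr0 j) (hr1 j).le hs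
    _ ≤ ∑ j ∈ univ.filter (fun j : Fin J => (j : ℕ) + 1 < J), r j ^ Dt := by
        refine sum_le_sum_of_subset_of_nonneg (fun j hj => ?_)
          fun j _ _ => (Real.rpow_pos_of_pos (hr0 j) _).le
        simp only [mem_filter, mem_univ, true_and] at hj ⊢
        have : (j : ℕ) < i := hj
        omega
    _ = 1 := hDt

theorem stmt_8
    (J : ℕ) (hJ : 2 ≤ J)
    (r : Fin J → ℝ) (hr0 : ∀ j, 0 < r j) (hr1 : ∀ j, r j < 1)
    (hanti : Antitone r)
    (Dt : ℝ) (hDt : ∑ j ∈ Finset.univ.filter (fun j : Fin J => (j : ℕ) + 1 < J),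
      r j ^ Dt = 1)
    (s₀ : ℂ) (hzero : 1 - ∑ j, (r j : ℂ) ^ s₀ = 0)
    (hre1 : Dt < s₀.re) :
    0 < Real.log (r ⟨0, by omega⟩)⁻¹ ∧
    Real.log (r ⟨0, by omega⟩)⁻¹ ≤ (deriv (fun s : ℂ => 1 - ∑ j, (r j : ℂ) ^ s) s₀).re ∧
    deriv (fun s : ℂ => 1 - ∑ j, (r j : ℂ) ^ s) s₀ ≠ 0 ∧
    ‖1 / deriv (fun s : ℂ => 1 - ∑ j, (r j : ℂ) ^ s) s₀‖ ≤
      1 / Real.log (r ⟨0, by omega⟩)⁻¹ := by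
  set f' := deriv (fun s : ℂ => 1 - ∑ j, (r j : ℂ) ^ s) s₀
  set L := fun j => Real.log (r j)⁻¹
  have hL : Monotone L := fun i j hij =>
    Real.log_le_log (inv_pos.2 (hr0 i)) (inv_anti₀ (hr0 j) (hanti hij))
  have hL₀ : 0 < L ⟨0, by omega⟩ :=
    Real.log_pos ((one_lt_inv₀ (hr0 _)).2 (hr1 _))
  have hsum : ∑ j, ((r j : ℂ) ^ s₀).re = 1 := by
    rw [← Complex.re_sum, ← sub_eq_zero.1 hzero, Complex.one_re]
  have hre : L ⟨0, by omega⟩ ≤ f'.re := by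
    rw [re_deriv_one_sub_sum_cpow hr0]
    exact le_sum_mul_of_monotone hL hsum (sum_re_cpow_filter_lt_le_one hr0 hr1 hDt hre1.le)
      fun i => hL (Nat.zero_le (i : ℕ))
  have hnorm : L ⟨0, by omega⟩ ≤ ‖f'‖ := hre.trans (Complex.re_le_norm f')
  refine ⟨hL₀, hre, fun h => ?_, ?_⟩
  · rw [h, Complex.zero_re] at hre
    exact hre.not_gt hL₀
  · rw [norm_div, norm_one]
    exact one_div_le_one_div_of_le hL₀ hnorm
end

section
/- Let 1 > r_1 ≥ r_2 ≥ ⋯ ≥ r_J > 0 with J ≥ 2, let D be the real root of ∑_{j=1}^J r_j^D = 1, let D̃ be the real root of ∑_{j=1}^{J−1} r_j^{D̃} = 1, and let f(s) = 1 − ∑_{j=1}^J r_j^s. If s_0 is a zero of f with D̃ < Re(s_0) < D, then Re(r_j^{s_0}) ≥ 0 for every j = 1, 2, …, J. -/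
/-!
Write `σ = Re s₀`, so that `‖r_j^{s₀}‖ = r_j^σ`. Since the `r_j^{s₀}` sum to `1`,
`Re r_i^{s₀} ≥ 1 - ∑_{j ≠ i} r_j^σ`, and dropping the smallest ratio `r_J` instead of `r_i`
only enlarges the sum. Finally `∑_{j < J} r_j^σ < ∑_{j < J} r_j^{D̃} = 1` because `σ > D̃`
and every `r_j < 1`.
-/

open Finset

section RpowSum

variable {ι : Type*} {s : Finset ι} {r : ι → ℝ}

lemma nonneg_of_sum_rpow_eq_one (hr0 : ∀ j, 0 < r j) (hr1 : ∀ j, r j < 1) {a : ℝ}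
    (h : ∑ j ∈ s, r j ^ a = 1) : 0 ≤ a := by
  by_contra! ha
  obtain ⟨i, hi⟩ : s.Nonempty := nonempty_of_sum_ne_zero (h ▸ one_ne_zero)
  have hi_gt : 1 < r i ^ a := Real.one_lt_rpow_of_pos_of_lt_one_of_neg (hr0 i) (hr1 i) ha
  have hi_le : r i ^ a ≤ ∑ j ∈ s, r j ^ a :=
    single_le_sum (fun j _ => (Real.rpow_pos_of_pos (hr0 j) a).le) hi
  linarith

lemma sum_rpow_lt_one_of_lt (hr0 : ∀ j, 0 < r j) (hr1 : ∀ j, r j < 1) {a b : ℝ}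
    (h : ∑ j ∈ s, r j ^ a = 1) (hab : a < b) : ∑ j ∈ s, r j ^ b < 1 := by
  have hs : s.Nonempty := nonempty_of_sum_ne_zero (h ▸ one_ne_zero)
  rw [← h]
  exact sum_lt_sum_of_nonempty hs fun j _ => Real.rpow_lt_rpow_of_exponent_gt (hr0 j) (hr1 j) hab

end RpowSum

lemma Finset.sum_erase_le_sum_erase {ι M : Type*} [DecidableEq ι] [AddCommGroup M]
    [PartialOrder M] [IsOrderedAddMonoid M] {s : Finset ι} {f : ι → M} {i k : ι}
    (hi : i ∈ s) (hk : k ∈ s) (h : f k ≤ f i) :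
    ∑ j ∈ s.erase i, f j ≤ ∑ j ∈ s.erase k, f j := by
  rw [sum_erase_eq_sub hi, sum_erase_eq_sub hk]
  exact sub_le_sub_left h _

lemma Complex.one_sub_sum_erase_norm_le_re {ι : Type*} [Fintype ι] [DecidableEq ι]
    {z : ι → ℂ} (h : ∑ j, z j = 1) (i : ι) :
    1 - ∑ j ∈ univ.erase i, ‖z j‖ ≤ (z i).re := by
  have hzi : z i = 1 - ∑ j ∈ univ.erase i, z j := by
    rw [sum_erase_eq_sub (mem_univ i), h]
    ring
  have hre : (∑ j ∈ univ.erase i, z j).re ≤ ∑ j ∈ univ.erase i, ‖z j‖ := by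
    rw [re_sum]
    exact sum_le_sum fun j _ => re_le_norm (z j)
  rw [hzi, sub_re, one_re]
  linarith

lemma Fin.filter_succ_lt_eq_erase_last (n : ℕ) :
    univ.filter (fun j : Fin (n + 1) => (j : ℕ) + 1 < n + 1) = univ.erase (Fin.last n) := by
  ext j
  simp only [mem_filter, mem_univ, true_and, mem_erase, ne_eq, Fin.ext_iff, Fin.val_last, and_true]
  have := j.isLt
  omega

theorem stmt_9_general
    (J : ℕ)
    (r : Fin J → ℝ) (hr0 : ∀ j, 0 < r j) (hr1 : ∀ j, r j < 1)
    (hanti : Antitone r)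
    (Dt : ℝ) (hDt : ∑ j ∈ Finset.univ.filter (fun j : Fin J => (j : ℕ) + 1 < J),
      r j ^ Dt = 1)
    (s₀ : ℂ) (hzero : 1 - ∑ j, (r j : ℂ) ^ s₀ = 0)
    (hre1 : Dt < s₀.re) :
    ∀ j : Fin J, 0 ≤ ((r j : ℂ) ^ s₀).re := by
  intro i
  obtain ⟨n, rfl⟩ : ∃ n, J = n + 1 := Nat.exists_eq_succ_of_ne_zero i.pos.ne'
  rw [Fin.filter_succ_lt_eq_erase_last] at hDt
  have hσ : 0 ≤ s₀.re := (nonneg_of_sum_rpow_eq_one hr0 hr1 hDt).trans hre1.le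
  have hlast : r (Fin.last n) ^ s₀.re ≤ r i ^ s₀.re :=
    Real.rpow_le_rpow (hr0 _).le (hanti (Fin.le_last i)) hσ
  calc 0 ≤ 1 - ∑ j ∈ univ.erase (Fin.last n), r j ^ s₀.re :=
        sub_nonneg.2 (sum_rpow_lt_one_of_lt hr0 hr1 hDt hre1).le
    _ ≤ 1 - ∑ j ∈ univ.erase i, r j ^ s₀.re :=
        sub_le_sub_left (sum_erase_le_sum_erase (mem_univ i) (mem_univ _) hlast) 1
    _ = 1 - ∑ j ∈ univ.erase i, ‖(r j : ℂ) ^ s₀‖ := by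
        simp only [Complex.norm_cpow_eq_rpow_re_of_pos (hr0 _)]
    _ ≤ ((r i : ℂ) ^ s₀).re :=
        Complex.one_sub_sum_erase_norm_le_re (sub_eq_zero.1 hzero).symm i

/-- with `1 > r₁ ≥ ⋯ ≥ r_J > 0`, `D` the root of `∑ⱼ rⱼ^D = 1`,
`D̃` the root of `∑_{j<J} rⱼ^{D̃} = 1`, and `f(s) = 1 - ∑ⱼ rⱼ^s`, every zero `s₀`
of `f` with `D̃ < Re(s₀) < D` satisfies `Re(rⱼ^{s₀}) ≥ 0` for every `j`. -/
theorem stmt_9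
    (J : ℕ) (hJ : 2 ≤ J)
    (r : Fin J → ℝ) (hr0 : ∀ j, 0 < r j) (hr1 : ∀ j, r j < 1)
    (hanti : Antitone r)
    (D : ℝ) (hD : ∑ j, r j ^ D = 1)
    (Dt : ℝ) (hDt : ∑ j ∈ Finset.univ.filter (fun j : Fin J => (j : ℕ) + 1 < J),
      r j ^ Dt = 1)
    (s₀ : ℂ) (hzero : 1 - ∑ j, (r j : ℂ) ^ s₀ = 0)
    (hre1 : Dt < s₀.re) (hre2 : s₀.re < D) :
    ∀ j : Fin J, 0 ≤ ((r j : ℂ) ^ s₀).re :=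
  stmt_9_general J r hr0 hr1 hanti Dt hDt s₀ hzero hre1
end

section
/- Let 0 < r_J ≤ ⋯ ≤ r_1 < 1 (J ≥ 2), D the real root of ∑_j r_j^D = 1, f(s) = 1 − ∑_{j=1}^J r_j^s. Let 0 < ψ < π/2, μ = ψ² r_J^D / 8, and let σ_R be the unique real number with ∑_{j=1}^J r_j^{σ_R} = 1 + μ. Suppose t ∈ ℝ is such that there exists j_0 ∈ {1,…,J} whose reduced angle θ_{j_0}(t) (defined by θ_{j_0}(t) ≡ t log r_{j_0} mod 2π, −π ≤ θ_{j_0}(t) < π) satisfies |θ_{j_0}(t)| ≥ ψ. Then Re(f(σ_R + it)) ≥ μ. -/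
/-!
Write `Re f(σ_R + it) = 1 - ∑ⱼ aⱼ cos φⱼ` with `aⱼ = rⱼ^{σ_R}` and `φⱼ = t log rⱼ`. Since
`∑ⱼ aⱼ = 1 + μ`, this equals `-μ + ∑ⱼ aⱼ (1 - cos φⱼ)`, a sum of nonnegative terms. The single
term `j₀` already gives `2μ`: `σ_R ≤ D` makes `a_{j₀} ≥ r_{j₀}^D ≥ r_J^D`, and
`1 - cos θ ≥ 1 - cos ψ ≥ ψ²/4` because `ψ ≤ |θ| ≤ π` and `ψ < 2`.
-/

open Complex

namespace Real

lemma cos_le_one_sub_sq_div_four {x : ℝ} (hx : |x| ≤ 2) : cos x ≤ 1 - x ^ 2 / 4 := by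
  rcases eq_or_ne x 0 with rfl | hx₀
  · simp
  obtain ⟨y, hy⟩ : ∃ y, y = |x| / 2 := ⟨_, rfl⟩
  have hy₀ : 0 < y := by rw [hy]; exact half_pos (abs_pos.2 hx₀)
  have hy₁ : y ≤ 1 := by linarith
  have hy₂ : y ^ 2 ≤ 1 := by nlinarith
  have hsin : y - y ^ 3 / 6 < sin y := sin_gt_sub_cube hy₀
  have hpoly : 0 ≤ y - y ^ 3 / 6 := by nlinarith [mul_le_mul_of_nonneg_left hy₂ hy₀.le]
  -- `1 - cos x = 2 sin² (|x|/2)` and `sin y ≥ y (1 - y²/6) ≥ 5y/6` on `(0, 1]`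
  have hhalf : cos x = 1 - 2 * sin y ^ 2 := by
    rw [sin_sq_eq_half_sub, hy, mul_div_cancel₀ _ two_ne_zero, cos_abs]; ring
  have hsq : (y - y ^ 3 / 6) ^ 2 ≤ sin y ^ 2 := pow_le_pow_left₀ hpoly hsin.le 2
  have hx2 : x ^ 2 = 4 * y ^ 2 := by rw [hy, div_pow, sq_abs]; ring
  nlinarith [mul_nonneg (sq_nonneg y) (sub_nonneg.2 hy₂)]

lemma cos_le_one_sub_sq_div_four_of_le_abs {θ ψ : ℝ} (hθ : |θ| ≤ π) (hψ₀ : 0 ≤ ψ) (hψ₂ : ψ ≤ 2)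
    (hψθ : ψ ≤ |θ|) : cos θ ≤ 1 - ψ ^ 2 / 4 :=
  calc cos θ = cos |θ| := (cos_abs θ).symm
    _ ≤ cos ψ := cos_le_cos_of_nonneg_of_le_pi hψ₀ hθ hψθ
    _ ≤ 1 - ψ ^ 2 / 4 := cos_le_one_sub_sq_div_four (by rwa [abs_of_nonneg hψ₀])

lemma strictAnti_sum_rpow {ι : Type*} [Fintype ι] [Nonempty ι] {r : ι → ℝ} (hr₀ : ∀ j, 0 < r j)
    (hr₁ : ∀ j, r j < 1) : StrictAnti fun s : ℝ ↦ ∑ j, r j ^ s := fun _ _ hst ↦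
  Finset.sum_lt_sum_of_nonempty Finset.univ_nonempty fun j _ ↦
    rpow_lt_rpow_of_exponent_gt (hr₀ j) (hr₁ j) hst

lemma le_one_sub_sum_mul_cos {ι : Type*} [Fintype ι] {a φ : ι → ℝ} {μ : ℝ} (ha : ∀ j, 0 ≤ a j)
    (hsum : ∑ j, a j = 1 + μ) (j₀ : ι) (hj₀ : 2 * μ ≤ a j₀ * (1 - cos (φ j₀))) :
    μ ≤ 1 - ∑ j, a j * cos (φ j) := by
  have hsplit : 1 - ∑ j, a j * cos (φ j) = -μ + ∑ j, a j * (1 - cos (φ j)) := by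
    simp only [mul_sub, mul_one, Finset.sum_sub_distrib, hsum]; ring
  have hterm : a j₀ * (1 - cos (φ j₀)) ≤ ∑ j, a j * (1 - cos (φ j)) :=
    Finset.single_le_sum (fun j _ ↦ mul_nonneg (ha j) (sub_nonneg.2 (cos_le_one _)))
      (Finset.mem_univ j₀)
  linarith

end Real

lemma Complex.re_ofReal_cpow_of_pos {r : ℝ} (hr : 0 < r) (σ t : ℝ) :
    ((r : ℂ) ^ ((σ : ℂ) + t * I)).re = r ^ σ * Real.cos (t * Real.log r) := by
  rw [cpow_def_of_ne_zero (ofReal_ne_zero.2 hr.ne'), ← ofReal_log hr.le, exp_re,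
    Real.rpow_def_of_pos hr]
  simp [mul_comm]

/-- with `f(s) = 1 - ∑ⱼ rⱼ^s`, `0 < ψ < π/2`, `μ = ψ² r_J^D/8` and
`σ_R` the real number with `∑ⱼ rⱼ^{σ_R} = 1 + μ`: if for some `j₀` the reduced
angle `θ_{j₀}(t)` of `t log r_{j₀}` satisfies `|θ_{j₀}(t)| ≥ ψ`, then
`Re(f(σ_R + it)) ≥ μ`. -/
theorem stmt_11
    (J : ℕ) (hJ : 2 ≤ J)
    (r : Fin J → ℝ) (hr0 : ∀ j, 0 < r j) (hr1 : ∀ j, r j < 1)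
    (hanti : Antitone r)
    (D : ℝ) (hD : ∑ j, r j ^ D = 1)
    (ψ : ℝ) (hψ0 : 0 < ψ) (hψ1 : ψ < Real.pi / 2)
    (μ : ℝ) (hμ : μ = ψ ^ 2 * r ⟨J - 1, by omega⟩ ^ D / 8)
    (σR : ℝ) (hσR : ∑ j, r j ^ σR = 1 + μ)
    (t : ℝ)
    (hangle : ∃ j₀ : Fin J, ∃ θ : ℝ, -Real.pi ≤ θ ∧ θ < Real.pi ∧
      (∃ m : ℤ, t * Real.log (r j₀) = θ + 2 * Real.pi * m) ∧ ψ ≤ |θ|) :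
    μ ≤ (1 - ∑ j, (r j : ℂ) ^ ((σR : ℂ) + (t : ℂ) * I)).re := by
  obtain ⟨j₀, θ, hθπ₁, hθπ₂, ⟨m, hm⟩, hψθ⟩ := hangle
  set jJ : Fin J := ⟨J - 1, by omega⟩
  have : Nonempty (Fin J) := ⟨jJ⟩
  have hanti_sum := Real.strictAnti_sum_rpow hr0 hr1
  have hrJ_pos := Real.rpow_pos_of_pos (hr0 jJ) D
  have hμ₀ : 0 ≤ μ := by rw [hμ]; positivity
  have hD₀ : 0 ≤ D := hanti_sum.le_iff_ge.1 (by simp [hD]; omega)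
  have hσD : σR ≤ D := hanti_sum.le_iff_ge.1 (by rw [hD, hσR]; linarith)
  have hr_j₀ : r jJ ^ D ≤ r j₀ ^ σR :=
    (Real.rpow_le_rpow (hr0 jJ).le (hanti (Fin.le_def.2 (by simp [jJ]; omega))) hD₀).trans
      (Real.rpow_le_rpow_of_exponent_ge (hr0 j₀) (hr1 j₀).le hσD)
  have hcos : Real.cos (t * Real.log (r j₀)) ≤ 1 - ψ ^ 2 / 4 := by
    rw [hm, mul_comm _ (m : ℝ), Real.cos_add_int_mul_two_pi]
    exact Real.cos_le_one_sub_sq_div_four_of_le_abs (abs_le.2 ⟨hθπ₁, hθπ₂.le⟩) hψ0.le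
      (by linarith [Real.pi_le_four]) hψθ
  rw [sub_re, one_re, re_sum]
  simp only [re_ofReal_cpow_of_pos (hr0 _)]
  refine Real.le_one_sub_sum_mul_cos (fun j ↦ (Real.rpow_pos_of_pos (hr0 j) _).le) hσR j₀ ?_
  rw [hμ]
  nlinarith [sq_nonneg ψ]
end

section
/- Let 0 < r_J ≤ ⋯ ≤ r_1 < 1 (J ≥ 2), f(s) = 1 − ∑_{j=1}^J r_j^s, λ > 0, and let σ_L be the unique real number with ∑_{j=1}^J r_j^{σ_L} = 1 + λ. Suppose t ∈ ℝ is such that for every j ∈ {1,…,J}, the reduced angle θ_j(t) (θ_j(t) ≡ t log r_j mod 2π, −π ≤ θ_j(t) < π) satisfies |θ_j(t)| ≤ √(λ/(1+λ)). Then Re(f(σ_L + it)) ≤ −λ/2. -/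
open Complex

/-- with `f(s) = 1 - ∑ⱼ rⱼ^s`, `λ > 0` and `σ_L` the real number with
`∑ⱼ rⱼ^{σ_L} = 1 + λ`: if for every `j` the reduced angle `θⱼ(t)` of `t log rⱼ`
satisfies `|θⱼ(t)| ≤ √(λ/(1+λ))`, then `Re(f(σ_L + it)) ≤ -λ/2`. -/
theorem stmt_12
    (J : ℕ) (hJ : 2 ≤ J)
    (r : Fin J → ℝ) (hr0 : ∀ j, 0 < r j) (hr1 : ∀ j, r j < 1)
    (hanti : Antitone r)
    (lam : ℝ) (hlam : 0 < lam)
    (σL : ℝ) (hσL : ∑ j, r j ^ σL = 1 + lam)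
    (t : ℝ)
    (hangle : ∀ j : Fin J, ∃ θ : ℝ, -Real.pi ≤ θ ∧ θ < Real.pi ∧
      (∃ m : ℤ, t * Real.log (r j) = θ + 2 * Real.pi * m) ∧
      |θ| ≤ Real.sqrt (lam / (1 + lam))) :
    (1 - ∑ j, (r j : ℂ) ^ ((σL : ℂ) + (t : ℂ) * I)).re ≤ -lam / 2 := by
  have hre : ∀ j, ((r j : ℂ) ^ ((σL : ℂ) + (t : ℂ) * I)).re
      = r j ^ σL * Real.cos (t * Real.log (r j)) := by
    intro j
    rw [Complex.cpow_def_of_ne_zero (by exact_mod_cast (hr0 j).ne')]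
    rw [show Complex.log (r j : ℂ) = (Real.log (r j) : ℂ) from
      (Complex.ofReal_log (hr0 j).le).symm]
    rw [Complex.exp_re]
    have him : ((Real.log (r j) : ℂ) * ((σL : ℂ) + (t : ℂ) * I)).im = t * Real.log (r j) := by
      simp; ring
    have hreal : ((Real.log (r j) : ℂ) * ((σL : ℂ) + (t : ℂ) * I)).re = σL * Real.log (r j) := by
      simp; ring
    rw [him, hreal, Real.rpow_def_of_pos (hr0 j), mul_comm σL]
  have hbound : ∀ j, (1 - lam / (2 * (1 + lam))) * r j ^ σL
      ≤ ((r j : ℂ) ^ ((σL : ℂ) + (t : ℂ) * I)).re := by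
    intro j
    rw [hre j]
    obtain ⟨θ, h1, h2, ⟨m, hm⟩, hθ⟩ := hangle j
    have hcos : Real.cos (t * Real.log (r j)) = Real.cos θ := by
      rw [hm]
      rw [show θ + 2 * Real.pi * m = θ + m * (2 * Real.pi) by ring]
      exact Real.cos_add_int_mul_two_pi θ m
    have hθ2 : θ ^ 2 ≤ lam / (1 + lam) := by
      have := _root_.sq_abs θ
      nlinarith [Real.sq_sqrt (by positivity : (0:ℝ) ≤ lam / (1 + lam)), abs_nonneg θ,
        Real.sqrt_nonneg (lam / (1 + lam))]
    have hc : 1 - lam / (2 * (1 + lam)) ≤ Real.cos θ := by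
      have h0 := Real.one_sub_sq_div_two_le_cos (x := θ)
      have h' : lam / (2 * (1 + lam)) = (lam / (1 + lam)) / 2 := by
        rw [div_div]
        ring_nf
      linarith
    rw [hcos]
    have hrpos : 0 < r j ^ σL := Real.rpow_pos_of_pos (hr0 j) _
    nlinarith
  have hsum : (1 - lam / (2 * (1 + lam))) * (1 + lam)
      ≤ (∑ j, (r j : ℂ) ^ ((σL : ℂ) + (t : ℂ) * I)).re := by
    rw [Complex.re_sum]
    calc (1 - lam / (2 * (1 + lam))) * (1 + lam)
        = ∑ j, (1 - lam / (2 * (1 + lam))) * r j ^ σL := by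
          rw [← Finset.mul_sum, hσL]
      _ ≤ _ := Finset.sum_le_sum fun j _ => hbound j
  have hexp : (1 - lam / (2 * (1 + lam))) * (1 + lam) = 1 + lam / 2 := by
    field_simp
    ring
  simp only [Complex.sub_re, Complex.one_re]
  linarith [hsum, hexp ▸ hsum]
end

section
/- Let d ≥ 1 be an integer, g > 0, and κ_0, κ_1, …, κ_d real numbers satisfying the continuity relation ∑_{m=0}^{d−1} κ_m g^{d−m} = −κ_d. Then the function R(s) = ∑_{m=0}^d κ_m g^{s−m}/(s−m) can be written as R(s) = g^{s−d} P(s)/Q(s) with Q(s) = s(s−1)⋯(s−d) and P a polynomial of degree at most d−1; consequently, for any σ_1, σ_2 with d−1 < σ_1 < σ_2 < d there exists K > 0 such that |∑_{m=0}^d κ_m g^{s−m}/(s−m)| ≤ K/|s|² for all complex s with σ_1 ≤ Re(s) ≤ σ_2. -/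
/-!
Writing `g^(s-m) = g^(s-d) g^(d-m)` turns `R(s)` into `g^(s-d)` times the sum of simple fractions
`∑ cₘ / (s - m)` with `cₘ = κₘ g^(d-m)`. Over the common denominator `Q(s) = ∏ (s - m)` its
numerator `∑ cₘ ∏_{j ≠ m} (X - j)` has `X^d`-coefficient `∑ cₘ`, which the continuity relation
makes vanish, so `deg P ≤ d - 1`. On the strip `|g^(s-d)|` is bounded and every `|s - m|` is at
least the distance `δ` to the integers, hence at least `δ |s| / (δ + d)`; since
`|P(s)| = O(|s|^(d-1))` this gives `|R(s)| = O(|s|^(d-1) / |s|^(d+1))`.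
-/

open Polynomial Finset Lagrange

section PartialFractions

variable {F ι : Type*} [Field F] [DecidableEq ι] (S : Finset ι) (x c : ι → F)

theorem Lagrange.sum_div_sub_eq_eval_div_eval_nodal {s : F} (hs : ∀ i ∈ S, s ≠ x i) :
    ∑ i ∈ S, c i / (s - x i) =
      (∑ i ∈ S, C (c i) * nodal (S.erase i) x).eval s / (nodal S x).eval s := by
  simp only [eval_finsetSum, eval_mul, eval_C, eval_nodal, Finset.sum_div]
  refine Finset.sum_congr rfl fun i hi => ?_
  have hne : ∏ j ∈ S.erase i, (s - x j) ≠ 0 :=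
    prod_ne_zero_iff.2 fun j hj => sub_ne_zero.2 (hs j (mem_of_mem_erase hj))
  rw [← mul_prod_erase S (fun j => s - x j) hi, mul_div_mul_right _ _ hne]

theorem Lagrange.degree_sum_C_mul_nodal_erase_lt (hc : ∑ i ∈ S, c i = 0) :
    (∑ i ∈ S, C (c i) * nodal (S.erase i) x).degree < (#S - 1 : ℕ) := by
  have hdeg : ∀ i ∈ S, (nodal (S.erase i) x).natDegree = #S - 1 := fun i hi => by
    rw [natDegree_nodal, card_erase_of_mem hi]
  rw [degree_lt_iff_coeff_zero]
  intro n hn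
  simp only [finsetSum_coeff, coeff_C_mul]
  rcases hn.eq_or_lt with rfl | hlt
  · rw [← hc]
    refine Finset.sum_congr rfl fun i hi => ?_
    rw [← hdeg i hi, nodal_monic.coeff_natDegree, mul_one]
  · exact Finset.sum_eq_zero fun i hi => by
      rw [coeff_eq_zero_of_natDegree_lt (hdeg i hi ▸ hlt), mul_zero]

end PartialFractions

theorem Complex.sum_mul_cpow_sub_div_sub_eq {ι : Type*} [DecidableEq ι] (S : Finset ι)
    (x κ : ι → ℂ) {g : ℂ} (hg : g ≠ 0) (a : ℂ) {s : ℂ} (hs : ∀ i ∈ S, s ≠ x i) :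
    ∑ i ∈ S, κ i * g ^ (s - x i) / (s - x i) =
      g ^ (s - a) * (∑ i ∈ S, C (κ i * g ^ (a - x i)) * nodal (S.erase i) x).eval s /
        (nodal S x).eval s := by
  rw [mul_div_assoc, ← sum_div_sub_eq_eval_div_eval_nodal S x _ hs, mul_sum]
  refine sum_congr rfl fun i _ => ?_
  rw [show s - x i = (s - a) + (a - x i) by ring, cpow_add _ _ hg]
  ring

theorem norm_mul_le_mul_norm_sub {E : Type*} [SeminormedAddCommGroup E] {z w : E} {δ M : ℝ}
    (hδ : 0 ≤ δ) (hzw : δ ≤ ‖z - w‖) (hw : ‖w‖ ≤ M) : δ * ‖z‖ ≤ (δ + M) * ‖z - w‖ := by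
  have hM : 0 ≤ M := (norm_nonneg w).trans hw
  have := norm_le_norm_sub_add z w
  nlinarith [mul_le_mul_of_nonneg_left hw hδ, mul_le_mul_of_nonneg_left hzw hM]

theorem Polynomial.exists_norm_eval_le_mul_pow {𝕜 : Type*} [NormedField 𝕜] {P : 𝕜[X]} {n : ℕ}
    (hP : P.natDegree ≤ n) {r : ℝ} (hr : 0 < r) :
    ∃ B, 0 < B ∧ ∀ z : 𝕜, r ≤ ‖z‖ → ‖P.eval z‖ ≤ B * ‖z‖ ^ n := by
  set B := ∑ i ∈ range (n + 1), ‖P.coeff i‖ / r ^ (n - i)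
  have hB : 0 ≤ B := sum_nonneg fun i _ => by positivity
  refine ⟨B + 1, by positivity, fun z hz => ?_⟩
  have hz0 : 0 < ‖z‖ := hr.trans_le hz
  calc ‖P.eval z‖ ≤ ∑ i ∈ range (n + 1), ‖P.coeff i‖ * ‖z‖ ^ i := by
        rw [eval_eq_sum_range' (Nat.lt_succ_of_le hP)]
        refine (norm_sum_le _ _).trans_eq (Finset.sum_congr rfl fun i _ => ?_)
        rw [norm_mul, norm_pow]
    _ ≤ B * ‖z‖ ^ n := by
        rw [Finset.sum_mul]
        refine sum_le_sum fun i hi => ?_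
        have hi : i ≤ n := Nat.lt_succ_iff.1 (mem_range.1 hi)
        have hpow : ‖z‖ ^ i * r ^ (n - i) ≤ ‖z‖ ^ n := by
          calc ‖z‖ ^ i * r ^ (n - i) ≤ ‖z‖ ^ i * ‖z‖ ^ (n - i) := by gcongr
            _ = ‖z‖ ^ n := by rw [← pow_add, Nat.add_sub_cancel' hi]
        rw [div_mul_eq_mul_div, le_div_iff₀ (by positivity), mul_assoc]
        gcongr
    _ ≤ (B + 1) * ‖z‖ ^ n := by gcongr; linarith

theorem Complex.norm_ofReal_cpow_le_max {g : ℝ} (hg : 0 < g) {a b : ℝ} {z : ℂ}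
    (ha : a ≤ z.re) (hb : z.re ≤ b) : ‖(g : ℂ) ^ z‖ ≤ max (g ^ a) (g ^ b) := by
  rw [norm_cpow_eq_rpow_re_of_pos hg]
  rcases le_total 1 g with hg1 | hg1
  · exact (Real.rpow_le_rpow_of_exponent_le hg1 hb).trans (le_max_right _ _)
  · exact (Real.rpow_le_rpow_of_exponent_ge hg hg1 ha).trans (le_max_left _ _)

theorem Complex.min_sub_le_norm_sub_natCast {d m : ℕ} (hm : m ≤ d) {σ₁ σ₂ : ℝ} {s : ℂ}
    (h1 : σ₁ ≤ s.re) (h2 : s.re ≤ σ₂) : min (σ₁ - (d - 1)) (d - σ₂) ≤ ‖s - m‖ := by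
  have hre : |s.re - m| ≤ ‖s - m‖ := by simpa using abs_re_le_norm (s - m)
  rcases hm.lt_or_eq with hlt | rfl
  · have : (m : ℝ) ≤ d - 1 := by
      rw [le_sub_iff_add_le]; exact_mod_cast Nat.succ_le_of_lt hlt
    linarith [min_le_left (σ₁ - (d - 1)) (d - σ₂), le_abs_self (s.re - m)]
  · linarith [min_le_right (σ₁ - (m - 1)) (m - σ₂), neg_abs_le (s.re - m)]

theorem Complex.pow_le_norm_prod_sub_natCast {d : ℕ} {δ : ℝ} (hδ : 0 < δ) {s : ℂ}
    (hs : ∀ m ≤ d, δ ≤ ‖s - m‖) :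
    (δ / (δ + d) * ‖s‖) ^ (d + 1) ≤ ‖∏ m ∈ range (d + 1), (s - m)‖ := by
  rw [norm_prod, pow_eq_prod_const]
  refine prod_le_prod (fun _ _ => by positivity) fun m hm => ?_
  have hm : m ≤ d := Nat.lt_succ_iff.1 (mem_range.1 hm)
  rw [div_mul_eq_mul_div, div_le_iff₀ (by positivity), mul_comm _ (δ + d)]
  exact norm_mul_le_mul_norm_sub hδ.le (hs m hm) (by simpa using hm)

theorem Complex.exists_norm_cpow_mul_eval_div_prod_le {g : ℝ} (hg : 0 < g) {d : ℕ} {P : ℂ[X]}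
    (hP : P.natDegree < d) {δ : ℝ} (hδ : 0 < δ) (σ₁ σ₂ : ℝ) :
    ∃ K, 0 < K ∧ ∀ s : ℂ, σ₁ ≤ s.re → s.re ≤ σ₂ → (∀ m ≤ d, δ ≤ ‖s - m‖) →
      ‖(g : ℂ) ^ (s - d) * P.eval s / ∏ m ∈ range (d + 1), (s - m)‖ ≤ K / ‖s‖ ^ 2 := by
  obtain ⟨n, rfl⟩ : ∃ n, d = n + 1 := ⟨d - 1, by omega⟩
  obtain ⟨B, hB, hPB⟩ := exists_norm_eval_le_mul_pow (Nat.lt_succ_iff.1 hP) hδ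
  set A := max (g ^ (σ₁ - (n + 1 : ℕ))) (g ^ (σ₂ - (n + 1 : ℕ)))
  have hA : 0 < A := lt_max_of_lt_left (Real.rpow_pos_of_pos hg _)
  set c := δ / (δ + (n + 1 : ℕ))
  refine ⟨A * B / c ^ (n + 2), by positivity, fun s h1 h2 hs => ?_⟩
  have hs0 : δ ≤ ‖s‖ := by simpa using hs 0 (Nat.zero_le _)
  have hgs : ‖(g : ℂ) ^ (s - (n + 1 : ℕ))‖ ≤ A :=
    norm_ofReal_cpow_le_max hg (by simp only [sub_re, natCast_re]; linarith)
      (by simp only [sub_re, natCast_re]; linarith)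
  have hQ := pow_le_norm_prod_sub_natCast hδ hs
  rw [norm_div, norm_mul]
  have hcs : 0 < c * ‖s‖ := mul_pos (by positivity) (hδ.trans_le hs0)
  calc _ ≤ A * (B * ‖s‖ ^ n) / ‖∏ m ∈ range (n + 1 + 1), (s - m)‖ := by
        gcongr
        exact hPB s hs0
    _ ≤ A * (B * ‖s‖ ^ n) / (c * ‖s‖) ^ (n + 1 + 1) :=
        div_le_div_of_nonneg_left (by positivity) (pow_pos hcs _) hQ
    _ = A * B / c ^ (n + 2) / ‖s‖ ^ 2 := by
        have : ‖s‖ ≠ 0 := (hδ.trans_le hs0).ne'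
        have : c ≠ 0 := by positivity
        field_simp
        ring

/-- under the continuity relation `∑_{m<d} κₘ g^{d-m} = -κ_d`, the
function `R(s) = ∑_{m=0}^d κₘ g^{s-m}/(s-m)` equals `g^{s-d} P(s)/Q(s)` with
`Q(s) = s(s-1)⋯(s-d)` and `deg P ≤ d - 1`; consequently on every closed vertical
strip `d-1 < σ₁ ≤ Re(s) ≤ σ₂ < d` one has `|R(s)| ≤ K/|s|²` for some `K > 0`. -/
theorem stmt_13
    (d : ℕ) (hd : 1 ≤ d)
    (g : ℝ) (hg : 0 < g)
    (κ : ℕ → ℝ)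
    (hcont : ∑ m ∈ Finset.range d, κ m * g ^ ((d : ℝ) - m) = -κ d) :
    (∃ P : Polynomial ℂ, P.degree ≤ (d - 1 : ℕ) ∧
      ∀ s : ℂ, (∀ m : ℕ, m ≤ d → s ≠ (m : ℂ)) →
        (∑ m ∈ Finset.range (d + 1), (κ m : ℂ) * (g : ℂ) ^ (s - (m : ℂ)) / (s - (m : ℂ)))
          = (g : ℂ) ^ (s - (d : ℂ)) * P.eval s / ∏ m ∈ Finset.range (d + 1), (s - (m : ℂ))) ∧
    ∀ σ₁ σ₂ : ℝ, (d : ℝ) - 1 < σ₁ → σ₁ < σ₂ → σ₂ < d →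
      ∃ K : ℝ, 0 < K ∧ ∀ s : ℂ, σ₁ ≤ s.re → s.re ≤ σ₂ →
        ‖∑ m ∈ Finset.range (d + 1),
            (κ m : ℂ) * (g : ℂ) ^ (s - (m : ℂ)) / (s - (m : ℂ))‖
          ≤ K / ‖s‖ ^ 2 := by
  set c : ℕ → ℂ := fun m => κ m * (g : ℂ) ^ ((d : ℂ) - m)
  set P : ℂ[X] := ∑ m ∈ range (d + 1), C (c m) * nodal ((range (d + 1)).erase m) ((↑) : ℕ → ℂ)
  have hc : ∑ m ∈ range (d + 1), c m = 0 := by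
    have hreal : ∑ m ∈ range (d + 1), κ m * g ^ ((d : ℝ) - m) = 0 := by
      rw [sum_range_succ, hcont, sub_self, Real.rpow_zero, mul_one, neg_add_cancel]
    simpa [c, Complex.ofReal_cpow hg.le] using congrArg ((↑) : ℝ → ℂ) hreal
  have hPdeg : P.degree ≤ (d - 1 : ℕ) := by
    have hlt := degree_sum_C_mul_nodal_erase_lt (range (d + 1)) ((↑) : ℕ → ℂ) c hc
    rw [card_range, Nat.add_sub_cancel] at hlt
    exact Order.le_of_lt_succ (hlt.trans_eq (congrArg _ (Nat.sub_add_cancel hd).symm))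
  have hid : ∀ s : ℂ, (∀ m : ℕ, m ≤ d → s ≠ m) →
      ∑ m ∈ range (d + 1), (κ m : ℂ) * (g : ℂ) ^ (s - m) / (s - m)
        = (g : ℂ) ^ (s - d) * P.eval s / ∏ m ∈ range (d + 1), (s - m) := fun s hs => by
    rw [Complex.sum_mul_cpow_sub_div_sub_eq _ _ _ (Complex.ofReal_ne_zero.2 hg.ne') d
      fun m hm => hs m (Nat.lt_succ_iff.1 (mem_range.1 hm)), eval_nodal]
  refine ⟨⟨P, hPdeg, hid⟩, fun σ₁ σ₂ h1 _ h2 => ?_⟩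
  have hδ : 0 < min (σ₁ - (d - 1)) (d - σ₂) := lt_min (by linarith) (by linarith)
  obtain ⟨K, hK, hbound⟩ := Complex.exists_norm_cpow_mul_eval_div_prod_le hg (d := d) (P := P)
    (by have := natDegree_le_of_degree_le hPdeg; omega) hδ σ₁ σ₂
  refine ⟨K, hK, fun s hs1 hs2 => ?_⟩
  have hsep : ∀ m ≤ d, min (σ₁ - (d - 1)) (d - σ₂) ≤ ‖s - m‖ :=
    fun m hm => Complex.min_sub_le_norm_sub_natCast hm hs1 hs2
  rw [hid s fun m hm hsm => by simpa [hsm] using hδ.trans_le (hsep m hm)]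
  exact hbound s hs1 hs2 hsep
end
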